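/- arXiv:math/9905082 — 2 statements merged into one kernel-verified Lean document; each statement's English description precedes it below -/
import Mathlib

section
/- Let k ≥ 4 be an integer and set φ = (k+3, k+2, k+1, k) and χ = (k+2, k+2, k+1, k+1). Then g(φ) = 2k² + 1 and g(χ) = 2k² − 1; in particular g(χ) = g(φ) − 2. -/
/-- `h_χ(m) = Σᵢ₌₀³ [(nᵢ − m − 1)₊ − (i − m − 1)₊]` where `(x)₊ = max (x, 0)`. -/
def hChar4 (n0 n1 n2 n3 m : ℤ) : ℤ :=
  (max (n0 - m - 1) 0 - max (0 - m - 1) 0) +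
  (max (n1 - m - 1) 0 - max (1 - m - 1) 0) +
  (max (n2 - m - 1) 0 - max (2 - m - 1) 0) +
  (max (n3 - m - 1) 0 - max (3 - m - 1) 0)

/-- The genus of a numerical character: `g(χ) = Σ_{m ≥ 1} h_χ(m)`
(a finite sum, since `h_χ(m) = 0` for `m ≥ n₀ − 1`). -/
noncomputable def genusChar4 (n0 n1 n2 n3 : ℤ) : ℤ :=
  ∑ᶠ m ∈ Set.Ici (1 : ℤ), hChar4 n0 n1 n2 n3 m

lemma gauss_aux (n : ℕ) : 2 * ∑ m ∈ Finset.Icc (1:ℤ) (n:ℤ), m = (n:ℤ) * ((n:ℤ) + 1) := by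
  induction n with
  | zero => simp
  | succ n ih =>
      have h : Finset.Icc (1:ℤ) ((n:ℤ)+1) = insert ((n:ℤ)+1) (Finset.Icc (1:ℤ) (n:ℤ)) := by
        ext x; simp only [Finset.mem_Icc, Finset.mem_insert]; omega
      have hni : ((n:ℤ)+1) ∉ Finset.Icc (1:ℤ) (n:ℤ) := by simp
      push_cast
      rw [h, Finset.sum_insert hni]
      push_cast at ih
      ring_nf
      ring_nf at ih
      linarith

lemma S_eq (M a : ℤ) (h0 : 0 ≤ a) (h1 : a ≤ M + 1) :
    2 * ∑ m ∈ Finset.Icc (1:ℤ) M, max (a - m) 0 = a * (a - 1) := by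
  rcases eq_or_lt_of_le h0 with rfl | ha
  · rw [Finset.sum_congr rfl (fun x hx => max_eq_right (by
      simp only [Finset.mem_Icc] at hx; omega))]
    simp
  have hsub : Finset.Icc (1:ℤ) (a-1) ⊆ Finset.Icc (1:ℤ) M := by
    intro x; simp only [Finset.mem_Icc]; omega
  have hstep : ∑ m ∈ Finset.Icc (1:ℤ) M, max (a - m) 0
      = ∑ m ∈ Finset.Icc (1:ℤ) (a-1), max (a - m) 0 := by
    refine (Finset.sum_subset hsub ?_).symm
    intro x hx hx'
    simp only [Finset.mem_Icc] at hx hx'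
    have : a - x ≤ 0 := by omega
    exact max_eq_right this
  have hcongr : ∑ m ∈ Finset.Icc (1:ℤ) (a-1), max (a - m) 0
      = ∑ m ∈ Finset.Icc (1:ℤ) (a-1), (a - m) := by
    refine Finset.sum_congr rfl ?_
    intro x hx
    simp only [Finset.mem_Icc] at hx
    exact max_eq_left (by omega)
  rw [hstep, hcongr, Finset.sum_sub_distrib, Finset.sum_const, Int.card_Icc]
  have hcard : ((a - 1 + 1 - 1).toNat : ℤ) = a - 1 := by
    have := Int.toNat_of_nonneg (show (0:ℤ) ≤ a - 1 + 1 - 1 by omega)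
    omega
  have hg := gauss_aux (a-1).toNat
  have hton : ((a-1).toNat : ℤ) = a - 1 := Int.toNat_of_nonneg (by omega)
  rw [hton] at hg
  simp only [nsmul_eq_mul, hcard]
  nlinarith [hg]

lemma two_mul_genus (n0 n1 n2 n3 : ℤ) (h01 : n1 ≤ n0) (h12 : n2 ≤ n1) (h23 : n3 ≤ n2)
    (h3 : 3 ≤ n3) :
    2 * genusChar4 n0 n1 n2 n3 =
      (n0-1)*(n0-2) + (n1-1)*(n1-2) + (n2-1)*(n2-2) + (n3-1)*(n3-2) - 2 := by
  have hfin : genusChar4 n0 n1 n2 n3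
      = ∑ m ∈ Finset.Icc (1:ℤ) (n0-2), hChar4 n0 n1 n2 n3 m := by
    refine finsum_mem_eq_sum_of_subset _ ?_ ?_
    · intro x hx
      obtain ⟨hx1, hx2⟩ := hx
      simp only [Set.mem_Ici] at hx1
      simp only [Finset.coe_Icc, Set.mem_Icc]
      refine ⟨hx1, ?_⟩
      by_contra hc
      push_neg at hc
      have e0 : max (n0 - x - 1) 0 = 0 := max_eq_right (by omega)
      have e1 : max (n1 - x - 1) 0 = 0 := max_eq_right (by omega)
      have e2 : max (n2 - x - 1) 0 = 0 := max_eq_right (by omega)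
      have e3 : max (n3 - x - 1) 0 = 0 := max_eq_right (by omega)
      have f0 : max (0 - x - 1) 0 = 0 := max_eq_right (by omega)
      have f1 : max (1 - x - 1) 0 = 0 := max_eq_right (by omega)
      have f2 : max (2 - x - 1) 0 = 0 := max_eq_right (by omega)
      have f3 : max (3 - x - 1) 0 = 0 := max_eq_right (by omega)
      exact hx2 (by simp only [hChar4]; rw [e0, e1, e2, e3, f0, f1, f2, f3]; ring)
    · intro x hx
      simp only [Finset.coe_Icc, Set.mem_Icc] at hx
      exact hx.1
  have hpt : ∀ m ∈ Finset.Icc (1:ℤ) (n0-2), hChar4 n0 n1 n2 n3 m =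
      max ((n0-1) - m) 0 + max ((n1-1) - m) 0 + max ((n2-1) - m) 0 + max ((n3-1) - m) 0
      - max (1 - m) 0 - max (2 - m) 0 := by
    intro m hm
    simp only [Finset.mem_Icc] at hm
    have f0 : max ((0:ℤ) - m - 1) 0 = 0 := max_eq_right (by omega)
    have f1 : max ((1:ℤ) - m - 1) 0 = 0 := max_eq_right (by omega)
    have a0 : n0 - m - 1 = (n0-1) - m := by ring
    have a1 : n1 - m - 1 = (n1-1) - m := by ring
    have a2 : n2 - m - 1 = (n2-1) - m := by ring
    have a3 : n3 - m - 1 = (n3-1) - m := by ring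
    have b2 : (2:ℤ) - m - 1 = 1 - m := by ring
    have b3 : (3:ℤ) - m - 1 = 2 - m := by ring
    simp only [hChar4, f0, f1, a0, a1, a2, a3, b2, b3]
    ring
  rw [hfin, Finset.sum_congr rfl hpt]
  simp only [Finset.sum_sub_distrib, Finset.sum_add_distrib]
  have S0 := S_eq (n0-2) (n0-1) (by omega) (by omega)
  have S1 := S_eq (n0-2) (n1-1) (by omega) (by omega)
  have S2 := S_eq (n0-2) (n2-1) (by omega) (by omega)
  have S3 := S_eq (n0-2) (n3-1) (by omega) (by omega)
  have T1 := S_eq (n0-2) 1 (by omega) (by omega)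
  have T2 := S_eq (n0-2) 2 (by omega) (by omega)
  have e1 : (n1-1) - 1 = n1 - 2 := by ring
  ring_nf
  ring_nf at S0 S1 S2 S3 T1 T2
  linarith

/-- `g(k+3, k+2, k+1, k) = 2k² + 1` and `g(k+2, k+2, k+1, k+1) = 2k² − 1`;
in particular the latter is the former minus 2. -/
theorem stmt_7 (k : ℤ) (hk : 4 ≤ k) :
    genusChar4 (k + 3) (k + 2) (k + 1) k = 2 * k ^ 2 + 1 ∧
    genusChar4 (k + 2) (k + 2) (k + 1) (k + 1) = 2 * k ^ 2 - 1 ∧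
    genusChar4 (k + 2) (k + 2) (k + 1) (k + 1)
      = genusChar4 (k + 3) (k + 2) (k + 1) k - 2 := by
  have hφ := two_mul_genus (k+3) (k+2) (k+1) k (by omega) (by omega) (by omega) (by omega)
  have hχ := two_mul_genus (k+2) (k+2) (k+1) (k+1) (by omega) (by omega) (by omega) (by omega)
  refine ⟨by nlinarith, by nlinarith, by nlinarith⟩
end

section
/- Let k ≥ 4 be an integer. Then g((k+3, k+2, k+2, k+1)) = 2k² + 2k and g((k+2, k+2, k+2, k+2)) = 2k² + 2k − 1; consequently, every connected numerical character of length 4 and degree 4k+2 has genus at most 2k² + 2k. -/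
/-- A numerical character of length 4: integers `n₀ ≥ n₁ ≥ n₂ ≥ n₃ ≥ 4`. -/
def IsNumChar4 (n0 n1 n2 n3 : ℤ) : Prop :=
  n0 ≥ n1 ∧ n1 ≥ n2 ∧ n2 ≥ n3 ∧ n3 ≥ 4

/-- Connectedness: `nᵢ − nᵢ₊₁ ≤ 1` for `i = 0, 1, 2`. -/
def IsConnected4 (n0 n1 n2 n3 : ℤ) : Prop :=
  n0 - n1 ≤ 1 ∧ n1 - n2 ≤ 1 ∧ n2 - n3 ≤ 1

/-- The degree of a numerical character of length 4: `Σᵢ (nᵢ − i)`. -/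
def degChar4 (n0 n1 n2 n3 : ℤ) : ℤ :=
  (n0 - 0) + (n1 - 1) + (n2 - 2) + (n3 - 3)

lemma gauss (n : ℤ) (hn : 0 ≤ n) :
    2 * ∑ m ∈ Finset.Icc 1 (n - 1), max (n - m) 0 = n * (n - 1) := by
  refine Int.le_induction
    (motive := fun n _ => 2 * ∑ m ∈ Finset.Icc 1 (n - 1), max (n - m) 0 = n * (n - 1)) ?_ ?_ n hn
  · simp
  · intro n hn ih
    rcases eq_or_lt_of_le hn with h | hpos
    · subst h
      simp
    have h1 : Finset.Icc (1:ℤ) (n + 1 - 1) = Finset.Icc 1 n := by congr 1; ring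
    have h2 : (Finset.Icc (0:ℤ) (n - 1)).map (addRightEmbedding 1) = Finset.Icc 1 n := by
      rw [Finset.map_add_right_Icc]; congr 1 <;> ring
    have h3 : ∑ m ∈ Finset.Icc (1:ℤ) n, max (n + 1 - m) 0
        = ∑ m ∈ Finset.Icc (0:ℤ) (n - 1), max (n - m) 0 := by
      rw [← h2, Finset.sum_map]
      apply Finset.sum_congr rfl
      intro m _
      simp only [addRightEmbedding_apply]
      congr 1
      ring
    have h4 : Finset.Icc (0:ℤ) (n - 1) = insert 0 (Finset.Icc 1 (n - 1)) := by
      ext m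
      simp only [Finset.mem_Icc, Finset.mem_insert]
      omega
    have h5 : (0:ℤ) ∉ Finset.Icc (1:ℤ) (n - 1) := by simp
    rw [h1, h3, h4, Finset.sum_insert h5]
    have h6 : max (n - 0) 0 = n := by rw [sub_zero]; exact max_eq_left hn
    rw [h6]
    linarith

lemma sum_max_eq (n N : ℤ) (h0 : 0 ≤ n) (hN : n - 1 ≤ N) :
    2 * ∑ m ∈ Finset.Icc 1 N, max (n - m) 0 = n * (n - 1) := by
  rw [← gauss n h0]
  congr 1
  symm
  apply Finset.sum_subset
  · intro m hm
    simp only [Finset.mem_Icc] at *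
    omega
  · intro m hm hm'
    simp only [Finset.mem_Icc] at *
    apply max_eq_right
    omega

lemma hChar4_eq (n0 n1 n2 n3 m : ℤ) (hm : 1 ≤ m) :
    hChar4 n0 n1 n2 n3 m =
      max (n0 - 1 - m) 0 + max (n1 - 1 - m) 0 + max (n2 - 1 - m) 0 + max (n3 - 1 - m) 0
        - max (2 - m) 0 := by
  unfold hChar4
  have e0 : max (0 - m - 1) 0 = 0 := max_eq_right (by omega)
  have e1 : max (1 - m - 1) 0 = 0 := max_eq_right (by omega)
  have e2 : max (2 - m - 1) 0 = 0 := max_eq_right (by omega)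
  have e3 : max (3 - m - 1) 0 = max (2 - m) 0 := by congr 1; ring
  have f : ∀ a : ℤ, max (a - m - 1) 0 = max (a - 1 - m) 0 := by intro a; congr 1; ring
  rw [e0, e1, e2, e3, f n0, f n1, f n2, f n3]
  ring

lemma hChar4_zero (n0 n1 n2 n3 m : ℤ) (h1 : n1 ≤ n0) (h2 : n2 ≤ n0) (h3 : n3 ≤ n0)
    (h4 : 4 ≤ n0) (hm : n0 - 1 ≤ m) :
    hChar4 n0 n1 n2 n3 m = 0 := by
  rw [hChar4_eq _ _ _ _ _ (by omega)]
  rw [max_eq_right (by omega : n0 - 1 - m ≤ 0), max_eq_right (by omega : n1 - 1 - m ≤ 0),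
    max_eq_right (by omega : n2 - 1 - m ≤ 0), max_eq_right (by omega : n3 - 1 - m ≤ 0),
    max_eq_right (by omega : 2 - m ≤ 0)]
  ring

lemma genus_eq_sum (n0 n1 n2 n3 : ℤ) (h1 : n1 ≤ n0) (h2 : n2 ≤ n0) (h3 : n3 ≤ n0)
    (h4 : 4 ≤ n0) :
    genusChar4 n0 n1 n2 n3 = ∑ m ∈ Finset.Icc 1 (n0 - 2), hChar4 n0 n1 n2 n3 m := by
  unfold genusChar4
  apply finsum_mem_eq_sum_of_inter_support_eq
  ext m
  simp only [Set.mem_inter_iff, Set.mem_Ici, Function.mem_support, Finset.coe_Icc,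
    Set.mem_Icc]
  constructor
  · rintro ⟨hm, hsupp⟩
    refine ⟨⟨hm, ?_⟩, hsupp⟩
    by_contra hgt
    exact hsupp (hChar4_zero n0 n1 n2 n3 m h1 h2 h3 h4 (by omega))
  · rintro ⟨⟨hm, _⟩, hsupp⟩
    exact ⟨hm, hsupp⟩

lemma genus_formula (n0 n1 n2 n3 : ℤ) (h1 : n1 ≤ n0) (h2 : n2 ≤ n0) (h3 : n3 ≤ n0)
    (h4 : 4 ≤ n0) (g0 : 2 ≤ n1) (g1 : 2 ≤ n2) (g2 : 2 ≤ n3) :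
    2 * genusChar4 n0 n1 n2 n3 =
      (n0 - 1) * (n0 - 2) + (n1 - 1) * (n1 - 2) + (n2 - 1) * (n2 - 2) + (n3 - 1) * (n3 - 2)
        - 2 := by
  rw [genus_eq_sum n0 n1 n2 n3 h1 h2 h3 h4]
  rw [Finset.sum_congr rfl (fun m hm => hChar4_eq n0 n1 n2 n3 m
    (by simp only [Finset.mem_Icc] at hm; omega))]
  have expand : ∀ m : ℤ,
      max (n0 - 1 - m) 0 + max (n1 - 1 - m) 0 + max (n2 - 1 - m) 0 + max (n3 - 1 - m) 0
        - max (2 - m) 0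
      = ((((max (n0 - 1 - m) 0 + max (n1 - 1 - m) 0) + max (n2 - 1 - m) 0)
        + max (n3 - 1 - m) 0) - max (2 - m) 0) := fun m => rfl
  simp only [Finset.sum_sub_distrib, Finset.sum_add_distrib, mul_sub, mul_add]
  have u : ∀ a : ℤ, 2 ≤ a → a - 2 ≤ n0 - 2 →
      2 * ∑ m ∈ Finset.Icc 1 (n0 - 2), max (a - 1 - m) 0 = (a - 1) * (a - 2) := by
    intro a ha hb
    have := sum_max_eq (a - 1) (n0 - 2) (by omega) (by omega)
    rw [this]
    ring
  rw [u n0 (by omega) (by omega), u n1 (by omega) (by omega), u n2 (by omega) (by omega),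
    u n3 (by omega) (by omega), sum_max_eq 2 (n0 - 2) (by omega) (by omega)]
  ring


/-- `g(k+3, k+2, k+2, k+1) = 2k² + 2k`, `g(k+2, k+2, k+2, k+2) = 2k² + 2k − 1`,
and every connected numerical character of length 4 and degree `4k + 2` has genus at most
`2k² + 2k`. -/
theorem stmt_12 (k : ℤ) (hk : 4 ≤ k) :
    genusChar4 (k + 3) (k + 2) (k + 2) (k + 1) = 2 * k ^ 2 + 2 * k ∧
    genusChar4 (k + 2) (k + 2) (k + 2) (k + 2) = 2 * k ^ 2 + 2 * k - 1 ∧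
    (∀ n0 n1 n2 n3 : ℤ, IsNumChar4 n0 n1 n2 n3 → IsConnected4 n0 n1 n2 n3 →
      degChar4 n0 n1 n2 n3 = 4 * k + 2 →
      genusChar4 n0 n1 n2 n3 ≤ 2 * k ^ 2 + 2 * k) := by
  have e1 : genusChar4 (k + 3) (k + 2) (k + 2) (k + 1) = 2 * k ^ 2 + 2 * k := by
    have := genus_formula (k + 3) (k + 2) (k + 2) (k + 1)
      (by omega) (by omega) (by omega) (by omega) (by omega) (by omega) (by omega)
    nlinarith [this]
  have e2 : genusChar4 (k + 2) (k + 2) (k + 2) (k + 2) = 2 * k ^ 2 + 2 * k - 1 := by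
    have := genus_formula (k + 2) (k + 2) (k + 2) (k + 2)
      (by omega) (by omega) (by omega) (by omega) (by omega) (by omega) (by omega)
    nlinarith [this]
  refine ⟨e1, e2, ?_⟩
  intro n0 n1 n2 n3 hchar hconn hdeg
  obtain ⟨o1, o2, o3, o4⟩ := hchar
  obtain ⟨c1, c2, c3⟩ := hconn
  unfold degChar4 at hdeg
  have hcases : (n0 = k + 3 ∧ n1 = k + 2 ∧ n2 = k + 2 ∧ n3 = k + 1) ∨
      (n0 = k + 2 ∧ n1 = k + 2 ∧ n2 = k + 2 ∧ n3 = k + 2) := by omega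
  rcases hcases with ⟨r0, r1, r2, r3⟩ | ⟨r0, r1, r2, r3⟩ <;> subst r0 <;> subst r1 <;>
    subst r2 <;> subst r3
  · rw [e1]
  · rw [e2]; omega
end
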